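/- For every positive integer p and every real x with |x| < 1, ∑_{n=1}^∞ n^p (1/(1-x) - 1 - x - x² - ⋯ - x^n) = (x/(1-x)²) · ω_p(x/(1-x)). -/

import Mathlib

open Finset Real

/-- Stirling numbers of the second kind. -/
def stirling2 : ℕ → ℕ → ℕ
  | 0, 0 => 1
  | 0, _ + 1 => 0
  | _ + 1, 0 => 0
  | p + 1, k + 1 => (k + 1) * stirling2 p (k + 1) + stirling2 p k

/-- The geometric (Fubini) polynomial. -/
noncomputable def geomPoly (p : ℕ) (x : ℝ) : ℝ :=
  ∑ k ∈ Finset.range (p + 1), (stirling2 p k : ℝ) * k.factorial * x ^ k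

/-!
Since `n ^ p = ∑ₖ S(p, k) n(n - 1)⋯(n - k + 1)` and
`∑ₙ n(n - 1)⋯(n - k + 1) xⁿ = k! xᵏ / (1 - x) ^ (k + 1)`, the series `∑ₙ n ^ p xⁿ` equals
`ω_p(x / (1 - x)) / (1 - x)`. The tail `1 / (1 - x) - 1 - x - ⋯ - x ^ (n + 1)` is
`x ^ (n + 2) / (1 - x)`, so the left-hand side is `x / (1 - x)` times that series, whose
`n = 0` term vanishes because `p > 0`.
-/

theorem stirling2_eq_stirlingSecond : ∀ p k : ℕ, stirling2 p k = Nat.stirlingSecond p k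
  | 0, 0 | 0, _ + 1 | _ + 1, 0 => rfl
  | p + 1, k + 1 => by
    rw [stirling2, Nat.stirlingSecond_succ_succ, stirling2_eq_stirlingSecond p (k + 1),
      stirling2_eq_stirlingSecond p k]

theorem Nat.descFactorial_succ_add_mul_descFactorial (n k : ℕ) :
    n.descFactorial (k + 1) + k * n.descFactorial k = n * n.descFactorial k := by
  rcases le_or_gt k n with h | h
  · rw [Nat.descFactorial_succ, ← add_mul, Nat.sub_add_cancel h]
  · simp [Nat.descFactorial_eq_zero_iff_lt.2 h]

theorem Nat.pow_eq_sum_stirlingSecond_mul_descFactorial (n p : ℕ) :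
    n ^ p = ∑ k ∈ range (p + 1), stirlingSecond p k * n.descFactorial k := by
  induction p with
  | zero => simp
  | succ p ih =>
    set g : ℕ → ℕ := fun k ↦ k * stirlingSecond p k * n.descFactorial k
    -- `g` vanishes at both ends of `range (p + 2)`, so shifting its index changes nothing
    have hshift : ∑ k ∈ range (p + 1), g (k + 1) = ∑ k ∈ range (p + 1), g k := by
      have h0 : g 0 = 0 := by simp [g]
      have hlast : g (p + 1) = 0 := by simp [g, stirlingSecond_eq_zero_of_lt (lt_add_one p)]
      rw [← add_zero (∑ k ∈ range (p + 1), g (k + 1)), ← h0, ← sum_range_succ',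
        sum_range_succ, hlast, add_zero]
    rw [sum_range_succ', stirlingSecond_succ_zero, zero_mul, add_zero]
    calc n ^ (p + 1)
        = ∑ k ∈ range (p + 1), stirlingSecond p k * (n * n.descFactorial k) := by
          rw [pow_succ', ih, mul_sum]
          exact sum_congr rfl fun k _ ↦ by ring
      _ = ∑ k ∈ range (p + 1), (stirlingSecond p k * n.descFactorial (k + 1) + g k) := by
          simp_rw [← descFactorial_succ_add_mul_descFactorial, g]
          exact sum_congr rfl fun k _ ↦ by ring
      _ = ∑ k ∈ range (p + 1), (stirlingSecond p k * n.descFactorial (k + 1) + g (k + 1)) := by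
          rw [sum_add_distrib, sum_add_distrib, hshift]
      _ = ∑ k ∈ range (p + 1), stirlingSecond (p + 1) (k + 1) * n.descFactorial (k + 1) :=
          sum_congr rfl fun k _ ↦ by rw [stirlingSecond_succ_succ]; ring

theorem hasSum_descFactorial_mul_geometric {𝕜 : Type*} [NormedField 𝕜]
    [HasSummableGeomSeries 𝕜] (k : ℕ) {r : 𝕜} (hr : ‖r‖ < 1) :
    HasSum (fun n : ℕ ↦ (n.descFactorial k : 𝕜) * r ^ n)
      (k.factorial * r ^ k / (1 - r) ^ (k + 1)) := by
  have hshifted : HasSum (fun n : ℕ ↦ ((n + k).descFactorial k : 𝕜) * r ^ (n + k))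
      (k.factorial * r ^ k / (1 - r) ^ (k + 1)) := by
    rw [div_eq_mul_one_div]
    refine ((hasSum_choose_mul_geometric_of_norm_lt_one k hr).mul_left _).congr_fun fun n ↦ ?_
    rw [Nat.descFactorial_eq_factorial_mul_choose, pow_add]
    push_cast
    ring
  have hlow : ∑ n ∈ range k, (n.descFactorial k : 𝕜) * r ^ n = 0 :=
    sum_eq_zero fun n hn ↦ by simp [Nat.descFactorial_eq_zero_iff_lt.2 (mem_range.1 hn)]
  simpa [hlow] using (hasSum_nat_add_iff (f := fun n : ℕ ↦ (n.descFactorial k : 𝕜) * r ^ n) k).1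
    hshifted

theorem hasSum_pow_mul_geometric_eq_geomPoly (p : ℕ) {x : ℝ} (hx : |x| < 1) :
    HasSum (fun n : ℕ ↦ (n : ℝ) ^ p * x ^ n) (geomPoly p (x / (1 - x)) / (1 - x)) := by
  have hx1 : 1 - x ≠ 0 := by linarith [abs_lt.1 hx]
  have hsum := hasSum_sum (s := range (p + 1)) fun k _ ↦
    (hasSum_descFactorial_mul_geometric k (r := x) (by rwa [norm_eq_abs])).mul_left
      (stirling2 p k : ℝ)
  have hval : geomPoly p (x / (1 - x)) / (1 - x)
      = ∑ k ∈ range (p + 1), (stirling2 p k : ℝ) * (k.factorial * x ^ k / (1 - x) ^ (k + 1)) := by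
    rw [geomPoly, sum_div]
    refine sum_congr rfl fun k _ ↦ ?_
    rw [div_pow]
    field_simp
    ring
  refine hval ▸ hsum.congr_fun fun n ↦ ?_
  have hpow := congrArg (Nat.cast : ℕ → ℝ) (Nat.pow_eq_sum_stirlingSecond_mul_descFactorial n p)
  push_cast at hpow
  rw [hpow, sum_mul]
  exact sum_congr rfl fun k _ ↦ by rw [stirling2_eq_stirlingSecond, mul_assoc]

theorem one_div_one_sub_sub_geom_sum {K : Type*} [Field K] {x : K} (hx : x ≠ 1) (m : ℕ) :
    1 / (1 - x) - ∑ j ∈ range m, x ^ j = x ^ m / (1 - x) := by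
  have hx1 : 1 - x ≠ 0 := sub_ne_zero.2 hx.symm
  rw [geom_sum_eq hx]
  field_simp
  ring

theorem stmt_13 (p : ℕ) (hp : 0 < p) (x : ℝ) (hx : |x| < 1) :
    ∑' n : ℕ, ((n : ℝ) + 1) ^ p * (1 / (1 - x) - ∑ j ∈ Finset.range (n + 2), x ^ j)
      = (x / (1 - x) ^ 2) * geomPoly p (x / (1 - x)) := by
  have hx1 : x ≠ 1 := by linarith [abs_lt.1 hx]
  have hpos : HasSum (fun n : ℕ ↦ ((n + 1 : ℕ) : ℝ) ^ p * x ^ (n + 1))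
      (geomPoly p (x / (1 - x)) / (1 - x)) := by
    simpa [hp.ne'] using (hasSum_nat_add_iff' 1).2 (hasSum_pow_mul_geometric_eq_geomPoly p hx)
  convert (hpos.mul_left (x / (1 - x))).tsum_eq using 1
  · refine tsum_congr fun n ↦ ?_
    rw [one_div_one_sub_sub_geom_sum hx1]
    push_cast
    ring
  · have hx1' : 1 - x ≠ 0 := sub_ne_zero.2 hx1.symm
    field_simp
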